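/- arXiv:2311.05849 — 2 statements merged into one kernel-verified Lean document; each statement's English description precedes it below -/
import Mathlib

section
/- Given a relational equivalence E between types A₁ and A₂ and elements x_e : E x₁ x₂ and y_e : E y₁ y₂, the relation on paths defined by Id^E : (x₁ = y₁) → (x₂ = y₂) → Type, Id^E p q := (transport of x_e along p and q equals y_e) — equivalently, in the case p = rfl, q = rfl, Id^E rfl rfl := (x_e = y_e) — is again a relational equivalence between (x₁ = y₁) and (x₂ = y₂). -/
universe u

/-- HoTT-style contractibility: a center together with paths to every point. -/
def IsContr (X : Sort u) := Σ' x : X, ∀ y : X, x = y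

/-- The relation `Id^E` on path types, defined by path induction:
`IdE E xe ye rfl rfl := (xe = ye)`. -/
def IdE {A₁ A₂ : Type u} (E : A₁ → A₂ → Type u) {x₁ y₁ : A₁} {x₂ y₂ : A₂}
    (xe : E x₁ x₂) (ye : E y₁ y₂) : x₁ = y₁ → x₂ = y₂ → Type u
  | rfl, rfl => ULift (PLift (xe = ye))

theorem symm_trans_self' {X : Sort u} {a b : X} (e : a = b) : e.symm.trans e = rfl := by
  cases e; rfl

/-- Paths in a contractible type are contractible. -/
def isContr_eq {X : Sort u} (h : IsContr X) (x y : X) : IsContr (x = y) := by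
  refine ⟨(h.2 x).symm.trans (h.2 y), fun p => ?_⟩
  cases p; exact symm_trans_self' (h.2 x)

/-- Contractibility is closed under retracts. -/
def isContr_retract {X : Sort*} {Y : Sort*} (r : X → Y) (s : Y → X)
    (hrs : ∀ y, r (s y) = y) (hX : IsContr X) : IsContr Y :=
  ⟨r hX.1, fun y => (congrArg r (hX.2 (s y))).trans (hrs y)⟩

/-- If `E` is a relational equivalence between `A₁` and `A₂`, then `Id^E` is a
relational equivalence between the path types `x₁ = y₁` and `x₂ = y₂`. -/
theorem idE_relEquiv {A₁ A₂ : Type u} (E : A₁ → A₂ → Type u)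
    (hc₁ : ∀ a₁, IsContr (Σ' a₂ : A₂, E a₁ a₂))
    (hc₂ : ∀ a₂, IsContr (Σ' a₁ : A₁, E a₁ a₂))
    {x₁ y₁ : A₁} {x₂ y₂ : A₂} (xe : E x₁ x₂) (ye : E y₁ y₂) :
    (∀ p : x₁ = y₁, Nonempty (IsContr (Σ' q : x₂ = y₂, IdE E xe ye p q))) ∧
    (∀ q : x₂ = y₂, Nonempty (IsContr (Σ' p : x₁ = y₁, IdE E xe ye p q))) := by
  constructor
  · intro p
    cases p
    refine ⟨?_⟩
    have f : ∀ (z : Σ' a₂ : A₂, E x₁ a₂),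
        (⟨x₂, xe⟩ : Σ' a₂ : A₂, E x₁ a₂) = z →
        Σ' q : x₂ = z.1, IdE E xe z.2 rfl q := by
      rintro z rfl
      exact ⟨rfl, ⟨⟨rfl⟩⟩⟩
    refine isContr_retract (f ⟨y₂, ye⟩) ?_ ?_
        (isContr_eq (hc₁ x₁) _ _)
    · rintro ⟨q, e⟩
      cases q
      obtain ⟨⟨e⟩⟩ := e
      cases e
      exact rfl
    · rintro ⟨q, e⟩
      cases q
      obtain ⟨⟨e⟩⟩ := e
      cases e
      rfl
  · intro q
    cases q
    refine ⟨?_⟩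
    have f : ∀ (z : Σ' a₁ : A₁, E a₁ x₂),
        (⟨x₁, xe⟩ : Σ' a₁ : A₁, E a₁ x₂) = z →
        Σ' p : x₁ = z.1, IdE E xe z.2 p rfl := by
      rintro z rfl
      exact ⟨rfl, ⟨⟨rfl⟩⟩⟩
    refine isContr_retract (f ⟨y₁, ye⟩) ?_ ?_
        (isContr_eq (hc₂ x₂) _ _)
    · rintro ⟨p, e⟩
      cases p
      obtain ⟨⟨e⟩⟩ := e
      cases e
      exact rfl
    · rintro ⟨p, e⟩
      cases p
      obtain ⟨⟨e⟩⟩ := e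
      cases e
      rfl
end

section
/- Given a relational equivalence Γ_e between types Γ₁ and Γ₂ and, for each γ_e : Γ_e γ₁ γ₂, a relational equivalence A_e γ_e between A₁ γ₁ and A₂ γ₂ (families A₁ : Γ₁ → Type, A₂ : Γ₂ → Type), the dependent-function relation Π^E : (∀ γ₁, A₁ γ₁) → (∀ γ₂, A₂ γ₂) → Type given by Π^E f₁ f₂ := ∀ γ₁ γ₂ (γ_e : Γ_e γ₁ γ₂), A_e γ_e (f₁ γ₁) (f₂ γ₂) is again a relational equivalence between ∀ γ₁, A₁ γ₁ and ∀ γ₂, A₂ γ₂ (assuming function extensionality). -/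
universe u

/-- Transfer contractibility along a retraction. -/
def IsContr.ofRetract {X : Sort u} {Y : Sort*} (f : X → Y) (g : Y → X)
    (hfg : ∀ y, f (g y) = y) (h : IsContr X) : IsContr Y :=
  ⟨f h.1, fun y => (congrArg f (h.2 (g y))).trans (hfg y)⟩

theorem IsContr.eq {X : Sort u} (h : IsContr X) (a b : X) : a = b :=
  (h.2 a).symm.trans (h.2 b)

theorem psigma_snd_eq {α : Sort u} {P : α → Sort*} {a : α} {b b' : P a}
    (h : (⟨a, b⟩ : Σ' x, P x) = ⟨a, b'⟩) : b = b' := by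
  have := (PSigma.mk.injEq a b a b').mp h
  exact eq_of_heq this.2

def aux_contr {I J : Type u} (E : I → J → Type u)
    (hc : ∀ j, IsContr (Σ' i, E i j))
    (B : J → Type u) (R : ∀ i j, E i j → B j → Type u)
    (hR : ∀ i j (e : E i j), IsContr (Σ' b, R i j e b)) :
    IsContr (Σ' g : ∀ j, B j, ∀ i j (e : E i j), R i j e (g j)) := by
  set c : ∀ j, Σ' i, E i j := fun j => (hc j).1 with hcdef
  set f : ∀ j, B j := fun j => (hR (c j).1 j (c j).2).1.1 with hfdef
  have w : ∀ j, R (c j).1 j (c j).2 (f j) := fun j => (hR (c j).1 j (c j).2).1.2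
  have key : ∀ j (p : Σ' i, E i j), c j = p → R p.1 j p.2 (f j) := by
    intro j p hp
    subst hp
    exact w j
  have h : ∀ i j (e : E i j), R i j e (f j) :=
    fun i j e => key j ⟨i, e⟩ ((hc j).2 ⟨i, e⟩)
  refine ⟨⟨f, h⟩, ?_⟩
  rintro ⟨g, k⟩
  have hfg : f = g := by
    funext j
    have := (hR (c j).1 j (c j).2).eq ⟨f j, h (c j).1 j (c j).2⟩ ⟨g j, k (c j).1 j (c j).2⟩
    exact congrArg PSigma.fst this
  subst hfg
  have hk : h = k := by
    funext i j e
    exact psigma_snd_eq ((hR i j e).eq ⟨f j, h i j e⟩ ⟨f j, k i j e⟩)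
  rw [hk]

/-- Relational equivalences are closed under dependent products: given a relational
equivalence `Γe` between `Γ₁` and `Γ₂`, and fiberwise relational equivalences
`Ae γe` between `A₁ γ₁` and `A₂ γ₂`, the relation
`Π^E f₁ f₂ := ∀ γ₁ γ₂ γe, Ae γe (f₁ γ₁) (f₂ γ₂)` is a relational equivalence
between `∀ γ₁, A₁ γ₁` and `∀ γ₂, A₂ γ₂`. -/
theorem pi_relEquiv {Γ₁ Γ₂ : Type u} (Γe : Γ₁ → Γ₂ → Type u)
    (hΓ₁ : ∀ γ₁, IsContr (Σ' γ₂ : Γ₂, Γe γ₁ γ₂))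
    (hΓ₂ : ∀ γ₂, IsContr (Σ' γ₁ : Γ₁, Γe γ₁ γ₂))
    (A₁ : Γ₁ → Type u) (A₂ : Γ₂ → Type u)
    (Ae : ∀ γ₁ γ₂, Γe γ₁ γ₂ → A₁ γ₁ → A₂ γ₂ → Type u)
    (hA₁ : ∀ γ₁ γ₂ (γe : Γe γ₁ γ₂) (a₁ : A₁ γ₁),
      IsContr (Σ' a₂ : A₂ γ₂, Ae γ₁ γ₂ γe a₁ a₂))
    (hA₂ : ∀ γ₁ γ₂ (γe : Γe γ₁ γ₂) (a₂ : A₂ γ₂),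
      IsContr (Σ' a₁ : A₁ γ₁, Ae γ₁ γ₂ γe a₁ a₂)) :
    (∀ f₁ : ∀ γ₁, A₁ γ₁, Nonempty (IsContr
      (Σ' f₂ : ∀ γ₂, A₂ γ₂, ∀ γ₁ γ₂ (γe : Γe γ₁ γ₂), Ae γ₁ γ₂ γe (f₁ γ₁) (f₂ γ₂)))) ∧
    (∀ f₂ : ∀ γ₂, A₂ γ₂, Nonempty (IsContr
      (Σ' f₁ : ∀ γ₁, A₁ γ₁, ∀ γ₁ γ₂ (γe : Γe γ₁ γ₂), Ae γ₁ γ₂ γe (f₁ γ₁) (f₂ γ₂)))) := by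
  constructor
  · intro f₁
    exact ⟨aux_contr Γe hΓ₂ A₂ (fun γ₁ γ₂ γe b => Ae γ₁ γ₂ γe (f₁ γ₁) b)
      (fun γ₁ γ₂ γe => hA₁ γ₁ γ₂ γe (f₁ γ₁))⟩
  · intro f₂
    have h := aux_contr (fun γ₂ γ₁ => Γe γ₁ γ₂) hΓ₁ A₁
      (fun γ₂ γ₁ e a₁ => Ae γ₁ γ₂ e a₁ (f₂ γ₂))
      (fun γ₂ γ₁ e => hA₂ γ₁ γ₂ e (f₂ γ₂))
    exact ⟨h.ofRetract (fun p => ⟨p.1, fun γ₁ γ₂ γe => p.2 γ₂ γ₁ γe⟩)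
      (fun p => ⟨p.1, fun γ₂ γ₁ γe => p.2 γ₁ γ₂ γe⟩) (fun p => rfl)⟩
end
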